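/- arXiv:1410.5023 — 3 statements merged into one kernel-verified Lean document; each statement's English description precedes it below -/
import Mathlib

section
/- Let α and β be compositions of m and n respectively, corresponding to subsets of [m-1] and [n-1] via partial sums. Let w_α and w_β be words on disjoint alphabets with descent compositions α and β respectively. Then the product of fundamental quasisymmetric functions satisfies F_α · F_β = ∑_{w ∈ w_α ⧢ w_β} F_{Des(w)}, where the sum is over all shuffles w of w_α and w_β, and F_{Des(w)} denotes the fundamental quasisymmetric function of the descent composition of w. -/
/-!
A monomial `x^d` occurs in `F_γ` iff its variable indices, listed weakly increasingly as
`i₁ ≤ ⋯ ≤ iₙ`, increase strictly at every descent of `γ`. For a word `w` with descent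
composition `γ` this says that the pairs `(w_k, i_k)` increase by index and then by letter,
so the monomials of `F_{Des w}` are the sorted labellings of `w`. A monomial `x^{d₁} x^{d₂}` of
`F_α F_β` is thus a pair of sorted labellings of `wα` and `wβ`. Sorting their union gives a
sorted labelling, with monomial `x^{d₁ + d₂}`, of a shuffle of `wα` and `wβ`; as the alphabets
are disjoint, restricting a sorted labelling of a shuffle to each alphabet inverts this.
-/

/-- The multiset of all shuffles (interleavings) of two words. -/
def shuffles {α : Type*} : List α → List α → Multiset (List α)
  | [], w => {w}
  | a :: v, [] => {a :: v}
  | a :: v, b :: w =>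
      ((shuffles v (b :: w)).map (a :: ·)) + ((shuffles (a :: v) w).map (b :: ·))
  termination_by v w => v.length + w.length
  decreasing_by all_goals (simp; try omega)

/-- The descent composition of a word of distinct letters. -/
def descComp : List ℕ → List ℕ
  | [] => []
  | [_] => [1]
  | a :: b :: t =>
      if b < a then 1 :: descComp (b :: t)
      else
        match descComp (b :: t) with
        | [] => [1]
        | c :: r => (c + 1) :: r

/-- The list of partial sums of a composition. -/
def psums : List ℕ → List ℕ
  | [] => []
  | a :: t => a :: (psums t).map (a + ·)

/-- The descent set of a composition `α ⊨ n`: the set of proper partial sums. -/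
def Dset (α : List ℕ) : Finset ℕ := (psums α).dropLast.toFinset

/-- The exponent composition of a monomial `d` in the variables `x_0, x_1, …`:
the list of its nonzero exponents read in increasing order of the variable
index. -/
noncomputable def expComp (d : ℕ →₀ ℕ) : List ℕ :=
  (d.support.sort (· ≤ ·)).map d

/-- `β` refines `α` (written `β ≤ α`): both are compositions of the same `n`
and every partial sum of `α` is a partial sum of `β`. -/
def Refines (β α : List ℕ) : Prop := β.sum = α.sum ∧ Dset α ⊆ Dset β

instance : ∀ β α : List ℕ, Decidable (Refines β α) := fun _ _ => by
  unfold Refines; infer_instance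

/-- The fundamental quasisymmetric function `F_α = ∑_{β ≤ α} M_β`, realized as
a formal power series in countably many variables: the coefficient of a
monomial is `1` exactly when its exponent composition refines `α` (each
monomial occurs in `M_β` for exactly one `β`, namely its exponent
composition). -/
noncomputable def Fqs (K : Type) [Field K] (α : List ℕ) : MvPowerSeries ℕ K :=
  fun d => if Refines (expComp d) α then (1 : K) else 0

lemma psums_ne_nil {γ : List ℕ} (h : γ ≠ []) : psums γ ≠ [] := by
  cases γ with
  | nil => contradiction
  | cons a t => simp [psums]

lemma Dset_cons (c : ℕ) {γ : List ℕ} (h : γ ≠ []) :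
    Dset (c :: γ) = insert c ((Dset γ).image (c + ·)) := by
  have hne : (psums γ).map (c + ·) ≠ [] := by simpa using psums_ne_nil h
  ext x
  simp [Dset, psums, List.dropLast_cons_of_ne_nil hne, ← List.map_dropLast]

lemma Dset_succ_cons (c : ℕ) (γ : List ℕ) :
    Dset ((c + 1) :: γ) = (Dset (c :: γ)).image (· + 1) := by
  rcases eq_or_ne γ [] with rfl | hγ
  · rfl
  · simp only [Dset_cons _ hγ, Finset.image_insert, Finset.image_image, Function.comp_def]
    congr 2
    funext x
    omega

lemma descComp_ne_nil : ∀ {w : List ℕ}, w ≠ [] → descComp w ≠ []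
  | [_], _ => by simp [descComp]
  | _ :: _ :: _, _ => by
      rw [descComp]
      split_ifs
      · simp
      · split <;> simp

lemma descComp_cons_cons_of_lt {a b : ℕ} (t : List ℕ) (h : b < a) :
    descComp (a :: b :: t) = 1 :: descComp (b :: t) := by
  simp [descComp, h]

lemma descComp_cons_cons_of_le {a b : ℕ} (t : List ℕ) (h : a ≤ b) :
    ∃ c r, descComp (b :: t) = c :: r ∧ descComp (a :: b :: t) = (c + 1) :: r := by
  obtain ⟨c, r, hcr⟩ := List.exists_cons_of_ne_nil (descComp_ne_nil (w := b :: t) (by simp))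
  exact ⟨c, r, hcr, by simp [descComp, h.not_gt, hcr]⟩

lemma sum_descComp : ∀ w : List ℕ, (descComp w).sum = w.length
  | [] => rfl
  | [a] => rfl
  | a :: b :: t => by
      have ih := sum_descComp (b :: t)
      rcases lt_or_ge b a with h | h
      · simp only [descComp_cons_cons_of_lt t h, List.sum_cons, ih, List.length_cons]
        omega
      · obtain ⟨c, r, hbt, hab⟩ := descComp_cons_cons_of_le t h
        simp only [hbt, List.sum_cons, List.length_cons] at ih ⊢
        rw [hab, List.sum_cons]
        omega

lemma Dset_descComp_cons_cons (a b : ℕ) (t : List ℕ) :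
    Dset (descComp (a :: b :: t)) =
      if b < a then insert 1 ((Dset (descComp (b :: t))).image (· + 1))
      else (Dset (descComp (b :: t))).image (· + 1) := by
  split_ifs with h
  · rw [descComp_cons_cons_of_lt t h, Dset_cons 1 (descComp_ne_nil (by simp))]
    simp only [add_comm 1]
  · obtain ⟨c, r, hbt, hab⟩ := descComp_cons_cons_of_le t (not_lt.mp h)
    rw [hab, hbt, Dset_succ_cons]

lemma zero_notMem_Dset_descComp : ∀ w : List ℕ, 0 ∉ Dset (descComp w)
  | [] | [_] => by simp [descComp, Dset, psums]
  | a :: b :: t => by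
      rw [Dset_descComp_cons_cons]
      split_ifs <;> simp

lemma succ_mem_Dset_descComp_iff : ∀ (w : List ℕ) (j : ℕ),
    j + 1 ∈ Dset (descComp w) ↔ j + 1 < w.length ∧ w.getD (j + 1) 0 < w.getD j 0
  | [], _ | [_], _ => by simp [descComp, Dset, psums]
  | a :: b :: t, 0 => by
      have := zero_notMem_Dset_descComp (b :: t)
      rw [Dset_descComp_cons_cons]
      split_ifs with h <;> simp [h, this]
  | a :: b :: t, i + 1 => by
      have ih := succ_mem_Dset_descComp_iff (b :: t) i
      rw [Dset_descComp_cons_cons]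
      split_ifs <;> simp [ih]

def replicateEach (e : ℕ → ℕ) (ks : List ℕ) : List ℕ :=
  ks.flatMap fun k => List.replicate (e k) k

lemma replicateEach_cons (e : ℕ → ℕ) (k : ℕ) (ks : List ℕ) :
    replicateEach e (k :: ks) = List.replicate (e k) k ++ replicateEach e ks := rfl

lemma length_replicateEach (e : ℕ → ℕ) (ks : List ℕ) :
    (replicateEach e ks).length = (ks.map e).sum := by
  induction ks with
  | nil => rfl
  | cons k ks ih => simp [replicateEach_cons, ih]

lemma count_replicateEach (e : ℕ → ℕ) (a : ℕ) {ks : List ℕ} (hks : ks.Nodup) :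
    (replicateEach e ks).count a = if a ∈ ks then e a else 0 := by
  induction ks with
  | nil => rfl
  | cons k ks ih =>
      obtain ⟨hk, hks⟩ := List.nodup_cons.mp hks
      rw [replicateEach_cons, List.count_append, List.count_replicate, ih hks]
      by_cases hak : a = k
      · subst hak
        simp [hk]
      · simp [hak, Ne.symm hak]

lemma pairwise_replicateEach (e : ℕ → ℕ) {ks : List ℕ} (hks : ks.Pairwise (· < ·)) :
    (replicateEach e ks).Pairwise (· ≤ ·) := by
  induction ks with
  | nil => simp [replicateEach]
  | cons k ks ih =>
      obtain ⟨hk, hks⟩ := List.pairwise_cons.mp hks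
      refine List.pairwise_append.mpr ⟨List.pairwise_replicate.mpr (Or.inr le_rfl), ih hks, ?_⟩
      intro x hx y hy
      obtain ⟨k', hk', hy⟩ := List.mem_flatMap.mp hy
      rw [List.eq_of_mem_replicate hx, List.eq_of_mem_replicate hy]
      exact (hk k' hk').le

lemma getD_replicate_append (n k i : ℕ) (l : List ℕ) :
    (List.replicate n k ++ l).getD i 0 = if i < n then k else l.getD (i - n) 0 := by
  split_ifs with hi
  · rw [List.getD_append _ _ _ _ (by simpa using hi), List.getD_eq_getElem _ _ (by simpa using hi)]
    simp
  · rw [List.getD_append_right _ _ _ _ (by simpa using hi), List.length_replicate]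

lemma mem_Dset_map_iff (e : ℕ → ℕ) : ∀ {ks : List ℕ}, ks.Pairwise (· < ·) →
    (∀ k ∈ ks, 0 < e k) → ∀ j : ℕ, j ∈ Dset (ks.map e) ↔
      0 < j ∧ j < (replicateEach e ks).length ∧
        (replicateEach e ks).getD (j - 1) 0 < (replicateEach e ks).getD j 0
  | [], _, _, j => by simp [Dset, psums, replicateEach]
  | [k], _, _, j => by
      rw [List.map_singleton, show Dset [e k] = ∅ from rfl, replicateEach_cons,
        show replicateEach e [] = [] from rfl, getD_replicate_append, getD_replicate_append]
      simp only [Finset.notMem_empty, false_iff, List.length_append, List.length_replicate,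
        List.length_nil, add_zero]
      rintro ⟨-, hj, hlt⟩
      rw [if_pos (by omega), if_pos hj] at hlt
      exact lt_irrefl k hlt
  | k :: k₁ :: ks, hks, hpos, j => by
      obtain ⟨hk, hks'⟩ := List.pairwise_cons.mp hks
      have ih := mem_Dset_map_iff e hks' (fun x hx => hpos x (List.mem_cons_of_mem _ hx))
      have hk₀ : 0 < e k := hpos k (by simp)
      have hk₁ : 0 < e k₁ := hpos k₁ (by simp)
      rw [List.map_cons, Dset_cons _ (by simp), replicateEach_cons]
      simp only [Finset.mem_insert, Finset.mem_image, List.length_append, List.length_replicate,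
        getD_replicate_append]
      rcases lt_trichotomy j (e k) with hj | rfl | hj
      · simp only [hj, if_true, show j - 1 < e k by omega, lt_irrefl, and_false, iff_false]
        rintro (h | ⟨y, -, h⟩) <;> omega
      · simp only [true_or, true_iff, lt_irrefl, if_false, show e k - 1 < e k by omega, if_true,
          Nat.sub_self, replicateEach_cons]
        rw [getD_replicate_append, if_pos hk₁]
        refine ⟨hk₀, ?_, hk k₁ (by simp)⟩
        simp only [List.length_append, List.length_replicate]
        omega
      · obtain ⟨y, rfl⟩ := Nat.exists_eq_add_of_lt hj
        simp only [show ¬ e k + y + 1 < e k by omega, show ¬ e k + y + 1 - 1 < e k by omega,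
          if_false, show e k + y + 1 - 1 - e k = y by omega,
          show e k + y + 1 - e k = y + 1 by omega]
        simp only [add_assoc, Nat.add_left_cancel_iff, exists_eq_right, ih, Nat.add_sub_cancel]
        omega

/-- The indices of the variables of the monomial `x^d`, with multiplicity, in weakly
increasing order. -/
noncomputable def varWord (d : ℕ →₀ ℕ) : List ℕ :=
  replicateEach d (d.support.sort (· ≤ ·))

lemma length_varWord (d : ℕ →₀ ℕ) : (varWord d).length = (expComp d).sum :=
  length_replicateEach _ _

lemma pairwise_varWord (d : ℕ →₀ ℕ) : (varWord d).Pairwise (· ≤ ·) :=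
  pairwise_replicateEach _ d.support.sortedLT_sort.pairwise

lemma coe_varWord (d : ℕ →₀ ℕ) : (varWord d : Multiset ℕ) = Finsupp.toMultiset d := by
  ext a
  rw [Multiset.coe_count, Finsupp.count_toMultiset, varWord,
    count_replicateEach _ _ (d.support.sort_nodup _)]
  split_ifs with ha
  · rfl
  · exact (Finsupp.notMem_support_iff.mp (by simpa using ha)).symm

lemma eq_varWord_of_pairwise {d : ℕ →₀ ℕ} {f : List ℕ} (hf : f.Pairwise (· ≤ ·))
    (hd : (f : Multiset ℕ) = Finsupp.toMultiset d) : f = varWord d :=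
  List.Perm.eq_of_pairwise' hf (pairwise_varWord d)
    (Multiset.coe_eq_coe.mp (hd.trans (coe_varWord d).symm))

lemma succ_mem_Dset_expComp_iff (d : ℕ →₀ ℕ) (j : ℕ) :
    j + 1 ∈ Dset (expComp d) ↔
      j + 1 < (varWord d).length ∧ (varWord d).getD j 0 < (varWord d).getD (j + 1) 0 := by
  rw [expComp, mem_Dset_map_iff _ d.support.sortedLT_sort.pairwise
    (fun k hk => Nat.pos_of_ne_zero (Finsupp.mem_support_iff.mp ((Finset.mem_sort _).mp hk)))]
  simp [varWord]

/-- A labelled word is a list of pairs `(letter, variable index)`; it is sorted when it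
increases by index and, among equal indices, by letter. -/
def labelLE (p q : ℕ × ℕ) : Prop := p.2 < q.2 ∨ (p.2 = q.2 ∧ p.1 ≤ q.1)

instance : DecidableRel labelLE := fun _ _ => by unfold labelLE; infer_instance

instance : IsTrans (ℕ × ℕ) labelLE := ⟨fun _ _ _ => by unfold labelLE; omega⟩

instance : Std.Antisymm labelLE := ⟨fun _ _ => by unfold labelLE; grind⟩

instance : Std.Total labelLE := ⟨fun _ _ => by unfold labelLE; omega⟩

lemma labelLE_snd_le {p q : ℕ × ℕ} (h : labelLE p q) : p.2 ≤ q.2 := by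
  unfold labelLE at h; omega

lemma isChain_zip_labelLE_iff : ∀ {w s : List ℕ}, s.Pairwise (· ≤ ·) → s.length = w.length →
    ((w.zip s).IsChain labelLE ↔
      ∀ i, i + 1 < w.length → w.getD (i + 1) 0 < w.getD i 0 → s.getD i 0 < s.getD (i + 1) 0)
  | [], _, _, _ => by simp
  | [_], s, _, _ => by cases s <;> simp
  | _ :: _ :: _, [], _, h | _ :: _ :: _, [_], _, h => by simp at h
  | a :: b :: t, x :: y :: r, hs, hlen => by
      have hxy : x ≤ y := List.rel_of_pairwise_cons hs (by simp)
      have ih := isChain_zip_labelLE_iff (w := b :: t) hs.of_cons (by simpa using hlen)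
      rw [List.zip_cons_cons, List.zip_cons_cons, List.isChain_cons_cons, ← List.zip_cons_cons, ih]
      constructor
      · rintro ⟨h0, hrest⟩ (_ | i) hi hlt
        · simp only [labelLE] at h0
          simp only [zero_add, List.getD_cons_succ, List.getD_cons_zero] at hlt ⊢
          omega
        · exact hrest i (by simpa using hi) hlt
      · intro h
        refine ⟨?_, fun i hi hlt => h (i + 1) (by simpa using hi) hlt⟩
        have := h 0 (by simp)
        simp only [labelLE]
        simp only [zero_add, List.getD_cons_succ, List.getD_cons_zero] at this
        omega

lemma refines_expComp_descComp_iff (w : List ℕ) (d : ℕ →₀ ℕ) :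
    Refines (expComp d) (descComp w) ↔
      (varWord d).length = w.length ∧ (w.zip (varWord d)).Pairwise labelLE := by
  rw [Refines, sum_descComp, ← length_varWord, ← List.isChain_iff_pairwise]
  refine and_congr_right fun hlen => ?_
  rw [isChain_zip_labelLE_iff (pairwise_varWord d) hlen, Finset.subset_iff]
  constructor
  · intro h i hi hlt
    exact ((succ_mem_Dset_expComp_iff d i).mp
      (h ((succ_mem_Dset_descComp_iff w i).mpr ⟨hi, hlt⟩))).2
  · rintro h (_ | i) hj
    · exact absurd hj (zero_notMem_Dset_descComp w)
    · obtain ⟨hi, hlt⟩ := (succ_mem_Dset_descComp_iff w i).mp hj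
      exact (succ_mem_Dset_expComp_iff d i).mpr ⟨hlen ▸ hi, h i hi hlt⟩

section Shuffles

variable {α : Type*}

lemma perm_of_mem_shuffles : ∀ {u v w : List α}, w ∈ shuffles u v → w.Perm (u ++ v)
  | [], v, w | _ :: _, [], w => by
      rw [shuffles, Multiset.mem_singleton]
      rintro rfl
      simp
  | a :: u, b :: v, w => by
      rw [shuffles, Multiset.mem_add, Multiset.mem_map, Multiset.mem_map]
      rintro (⟨w', hw', rfl⟩ | ⟨w', hw', rfl⟩)
      · exact (perm_of_mem_shuffles hw').cons a
      · exact ((perm_of_mem_shuffles hw').cons b).trans List.perm_middle.symm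
  termination_by u v => u.length + v.length

lemma nodup_shuffles : ∀ {u v : List α}, (∀ x ∈ u, ∀ y ∈ v, x ≠ y) → (shuffles u v).Nodup
  | [], _, _ | _ :: _, [], _ => by
      rw [shuffles]
      exact Multiset.nodup_singleton _
  | a :: u, b :: v, hd => by
      rw [shuffles, Multiset.nodup_add]
      refine ⟨(nodup_shuffles fun x hx y hy => hd x (.tail _ hx) y hy).map
          (fun _ _ => List.cons_injective.eq_iff.mp),
        (nodup_shuffles fun x hx y hy => hd x hx y (.tail _ hy)).map
          (fun _ _ => List.cons_injective.eq_iff.mp), ?_⟩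
      rw [Multiset.disjoint_left]
      rintro _ h₁ h₂
      obtain ⟨_, _, rfl⟩ := Multiset.mem_map.mp h₁
      obtain ⟨_, _, h⟩ := Multiset.mem_map.mp h₂
      exact hd a (by simp) b (by simp) (List.cons_eq_cons.mp h).1.symm
  termination_by u v => u.length + v.length

lemma shuffles_nil_left (v : List α) : shuffles [] v = {v} := by
  rw [shuffles]

lemma shuffles_nil_right (u : List α) : shuffles u [] = {u} := by
  cases u <;> rw [shuffles]

lemma cons_mem_shuffles_cons_left {u v w : List α} (a : α) (h : w ∈ shuffles u v) :
    a :: w ∈ shuffles (a :: u) v := by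
  cases v with
  | nil =>
      rw [shuffles_nil_right, Multiset.mem_singleton] at h ⊢
      rw [h]
  | cons b v =>
      rw [shuffles]
      exact Multiset.mem_add.mpr (Or.inl (Multiset.mem_map_of_mem _ h))

lemma cons_mem_shuffles_cons_right {u v w : List α} (b : α) (h : w ∈ shuffles u v) :
    b :: w ∈ shuffles u (b :: v) := by
  cases u with
  | nil =>
      rw [shuffles_nil_left, Multiset.mem_singleton] at h ⊢
      rw [h]
  | cons a u =>
      rw [shuffles]
      exact Multiset.mem_add.mpr (Or.inr (Multiset.mem_map_of_mem _ h))

variable [DecidableEq α]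

lemma filter_mem_congr {l s t : List α} (h : ∀ x ∈ l, x ∈ s ↔ x ∈ t) :
    l.filter (· ∈ s) = l.filter (· ∈ t) ∧ l.filter (· ∉ s) = l.filter (· ∉ t) :=
  ⟨List.filter_congr fun x hx => by simp only [h x hx],
    List.filter_congr fun x hx => by simp only [h x hx]⟩

lemma filter_of_mem_shuffles : ∀ {u v w : List α}, (∀ x ∈ u, ∀ y ∈ v, x ≠ y) →
    w ∈ shuffles u v → w.filter (· ∈ u) = u ∧ w.filter (· ∉ u) = v
  | [], v, w, _, hw => by
      rw [shuffles_nil_left, Multiset.mem_singleton] at hw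
      simp [hw]
  | a :: u, [], w, _, hw => by
      rw [shuffles_nil_right, Multiset.mem_singleton] at hw
      subst hw
      exact ⟨List.filter_eq_self.mpr fun x hx => by simpa using hx,
        List.filter_eq_nil_iff.mpr fun x hx => by simpa only [decide_eq_true_eq, not_not]⟩
  | a :: u, b :: v, w, hd, hw => by
      rw [shuffles, Multiset.mem_add, Multiset.mem_map, Multiset.mem_map] at hw
      rcases hw with ⟨w', hw', rfl⟩ | ⟨w', hw', rfl⟩
      · obtain ⟨ih₁, ih₂⟩ := filter_of_mem_shuffles (fun x hx y hy => hd x (.tail _ hx) y hy) hw'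
        -- a letter of `w'` equal to `a` cannot come from `b :: v`, so it occurs in `u`
        have hmem : ∀ x ∈ w', x ∈ a :: u ↔ x ∈ u := fun x hx => by
          refine ⟨fun hxa => ?_, .tail _⟩
          rcases List.mem_append.mp ((perm_of_mem_shuffles hw').subset hx) with h | h
          · exact h
          · rcases List.mem_cons.mp hxa with rfl | h'
            · exact absurd rfl (hd x (by simp) x h)
            · exact h'
        obtain ⟨e₁, e₂⟩ := filter_mem_congr hmem
        exact ⟨by rw [List.filter_cons_of_pos (by simp), e₁, ih₁],
          by rw [List.filter_cons_of_neg (by simp), e₂, ih₂]⟩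
      · obtain ⟨ih₁, ih₂⟩ := filter_of_mem_shuffles (fun x hx y hy => hd x hx y (.tail _ hy)) hw'
        have hb : b ∉ a :: u := fun h => hd b h b (by simp) rfl
        exact ⟨by rw [List.filter_cons_of_neg (by simpa using hb), ih₁],
          by rw [List.filter_cons_of_pos (by simpa using hb), ih₂]⟩
  termination_by u v => u.length + v.length

lemma mem_shuffles_of_filter : ∀ {u v w : List α},
    w.filter (· ∈ u) = u → w.filter (· ∉ u) = v → w ∈ shuffles u v
  | u, v, [], h₁, h₂ => by
      rw [List.filter_nil] at h₁ h₂
      subst h₁ h₂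
      rw [shuffles]
      exact Multiset.mem_singleton_self _
  | u, v, c :: w, h₁, h₂ => by
      by_cases hc : c ∈ u
      · rw [List.filter_cons_of_pos (by simpa using hc)] at h₁
        rw [List.filter_cons_of_neg (by simpa using hc)] at h₂
        obtain ⟨u', rfl⟩ : ∃ u', u = c :: u' := ⟨_, h₁.symm⟩
        have h₁' := List.cons_injective.eq_iff.mp h₁
        -- a letter of `w` lies in `c :: u'` iff it survives the filter, i.e. lies in `u'`
        have hmem : ∀ x ∈ w, x ∈ c :: u' ↔ x ∈ u' := fun x hx =>
          ⟨fun h => h₁' ▸ List.mem_filter.mpr ⟨hx, by simpa using h⟩, .tail _⟩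
        obtain ⟨e₁, e₂⟩ := filter_mem_congr hmem
        exact cons_mem_shuffles_cons_left c (mem_shuffles_of_filter (e₁ ▸ h₁') (e₂ ▸ h₂))
      · rw [List.filter_cons_of_neg (by simpa using hc)] at h₁
        rw [List.filter_cons_of_pos (by simpa using hc)] at h₂
        obtain ⟨v', rfl⟩ : ∃ v', v = c :: v' := ⟨_, h₂.symm⟩
        exact cons_mem_shuffles_cons_right c
          (mem_shuffles_of_filter h₁ (List.cons_injective.eq_iff.mp h₂))

end Shuffles

section MultisetSort

variable {α : Type*} {r : α → α → Prop} [DecidableRel r] [IsTrans α r] [Std.Antisymm r]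
  [Std.Total r]

lemma Multiset.sort_coe_of_pairwise {l : List α} (h : l.Pairwise r) :
    Multiset.sort (l : Multiset α) r = l :=
  List.Perm.eq_of_pairwise' (Multiset.pairwise_sort _ r) h
    (Multiset.coe_eq_coe.mp (Multiset.sort_eq _ r))

lemma Multiset.filter_sort (s : Multiset α) (p : α → Prop) [DecidablePred p] :
    (s.sort r).filter (fun a => decide (p a)) = (s.filter p).sort r :=
  List.Perm.eq_of_pairwise' ((Multiset.pairwise_sort _ r).filter _) (Multiset.pairwise_sort _ r)
    (Multiset.coe_eq_coe.mp (by
      rw [← Multiset.filter_coe, Multiset.sort_eq, Multiset.sort_eq]))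

lemma Multiset.filter_sort_add {l₁ l₂ : List α} (h₁ : l₁.Pairwise r) (p : α → Prop)
    [DecidablePred p] (hp₁ : ∀ a ∈ l₁, p a) (hp₂ : ∀ a ∈ l₂, ¬ p a) :
    (Multiset.sort (↑l₁ + ↑l₂) r).filter (fun a => decide (p a)) = l₁ := by
  rw [Multiset.filter_sort, Multiset.filter_add, Multiset.filter_eq_self.mpr hp₁,
    Multiset.filter_eq_nil.mpr hp₂, add_zero, Multiset.sort_coe_of_pairwise h₁]

end MultisetSort

noncomputable def labelMonomial (L : List (ℕ × ℕ)) : ℕ →₀ ℕ :=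
  Multiset.toFinsupp ↑(L.map Prod.snd)

lemma labelMonomial_append (L₁ L₂ : List (ℕ × ℕ)) :
    labelMonomial (L₁ ++ L₂) = labelMonomial L₁ + labelMonomial L₂ := by
  rw [labelMonomial, List.map_append, ← Multiset.coe_add, Multiset.toFinsupp_add]; rfl

lemma labelMonomial_of_perm {L₁ L₂ : List (ℕ × ℕ)} (h : L₁.Perm L₂) :
    labelMonomial L₁ = labelMonomial L₂ := by
  rw [labelMonomial, labelMonomial, Multiset.coe_eq_coe.mpr (h.map Prod.snd)]

lemma labelMonomial_zip_varWord {w : List ℕ} {d : ℕ →₀ ℕ} (h : (varWord d).length = w.length) :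
    labelMonomial (w.zip (varWord d)) = d := by
  rw [labelMonomial, List.map_snd_zip h.le, coe_varWord, Finsupp.toMultiset_toFinsupp]

lemma varWord_labelMonomial {L : List (ℕ × ℕ)} (hL : L.Pairwise labelLE) :
    varWord (labelMonomial L) = L.map Prod.snd :=
  (eq_varWord_of_pairwise (hL.map Prod.snd fun _ _ => labelLE_snd_le)
    (Multiset.toFinsupp_toMultiset _).symm).symm

lemma zip_varWord_labelMonomial {L : List (ℕ × ℕ)} (hL : L.Pairwise labelLE) :
    (L.map Prod.fst).zip (varWord (labelMonomial L)) = L := by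
  simpa [varWord_labelMonomial hL] using List.zip_unzip L

lemma refines_labelMonomial {L : List (ℕ × ℕ)} (hL : L.Pairwise labelLE) :
    Refines (expComp (labelMonomial L)) (descComp (L.map Prod.fst)) := by
  refine (refines_expComp_descComp_iff _ _).mpr ⟨?_, by rwa [zip_varWord_labelMonomial hL]⟩
  simp [varWord_labelMonomial hL]

noncomputable def mergeLabellings (u v : List ℕ) (d₁ d₂ : ℕ →₀ ℕ) : List (ℕ × ℕ) :=
  Multiset.sort (↑(u.zip (varWord d₁)) + ↑(v.zip (varWord d₂))) labelLE

noncomputable def splitMonomial (u : List ℕ) (d : ℕ →₀ ℕ) (w : List ℕ) :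
    (ℕ →₀ ℕ) × (ℕ →₀ ℕ) :=
  (labelMonomial ((w.zip (varWord d)).filter (·.1 ∈ u)),
    labelMonomial ((w.zip (varWord d)).filter (·.1 ∉ u)))

lemma pairwise_mergeLabellings (u v : List ℕ) (d₁ d₂ : ℕ →₀ ℕ) :
    (mergeLabellings u v d₁ d₂).Pairwise labelLE :=
  Multiset.pairwise_sort _ _

section Bijection

variable {u v : List ℕ}

lemma filter_mergeLabellings (hd : ∀ x ∈ u, ∀ y ∈ v, x ≠ y) {d₁ d₂ : ℕ →₀ ℕ}
    (h₁ : Refines (expComp d₁) (descComp u)) (h₂ : Refines (expComp d₂) (descComp v)) :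
    (mergeLabellings u v d₁ d₂).filter (·.1 ∈ u) = u.zip (varWord d₁) ∧
      (mergeLabellings u v d₁ d₂).filter (·.1 ∉ u) = v.zip (varWord d₂) := by
  have hu : ∀ p ∈ u.zip (varWord d₁), p.1 ∈ u := fun p hp => (List.of_mem_zip hp).1
  have hv : ∀ p ∈ v.zip (varWord d₂), p.1 ∉ u := fun p hp hpu =>
    hd _ hpu _ (List.of_mem_zip hp).1 rfl
  refine ⟨Multiset.filter_sort_add ((refines_expComp_descComp_iff _ _).mp h₁).2 _ hu hv, ?_⟩
  rw [mergeLabellings, add_comm]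
  exact Multiset.filter_sort_add ((refines_expComp_descComp_iff _ _).mp h₂).2 _ hv
    fun p hp => not_not.mpr (hu p hp)

lemma labelMonomial_mergeLabellings {d₁ d₂ : ℕ →₀ ℕ}
    (h₁ : Refines (expComp d₁) (descComp u)) (h₂ : Refines (expComp d₂) (descComp v)) :
    labelMonomial (mergeLabellings u v d₁ d₂) = d₁ + d₂ := by
  have hperm : (mergeLabellings u v d₁ d₂).Perm (u.zip (varWord d₁) ++ v.zip (varWord d₂)) :=
    Multiset.coe_eq_coe.mp (by rw [mergeLabellings, Multiset.sort_eq, Multiset.coe_add])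
  rw [labelMonomial_of_perm hperm, labelMonomial_append,
    labelMonomial_zip_varWord ((refines_expComp_descComp_iff _ _).mp h₁).1,
    labelMonomial_zip_varWord ((refines_expComp_descComp_iff _ _).mp h₂).1]

lemma mergeLabellings_mem_shuffles (hd : ∀ x ∈ u, ∀ y ∈ v, x ≠ y) {d₁ d₂ : ℕ →₀ ℕ}
    (h₁ : Refines (expComp d₁) (descComp u)) (h₂ : Refines (expComp d₂) (descComp v)) :
    (mergeLabellings u v d₁ d₂).map Prod.fst ∈ shuffles u v := by
  obtain ⟨e₁, e₂⟩ := filter_mergeLabellings hd h₁ h₂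
  apply mem_shuffles_of_filter
  · rw [List.filter_map]
    exact e₁ ▸ List.map_fst_zip ((refines_expComp_descComp_iff _ _).mp h₁).1.ge
  · rw [List.filter_map]
    exact e₂ ▸ List.map_fst_zip ((refines_expComp_descComp_iff _ _).mp h₂).1.ge

lemma refines_mergeLabellings {d₁ d₂ : ℕ →₀ ℕ}
    (h₁ : Refines (expComp d₁) (descComp u)) (h₂ : Refines (expComp d₂) (descComp v)) :
    Refines (expComp (d₁ + d₂)) (descComp ((mergeLabellings u v d₁ d₂).map Prod.fst)) :=
  labelMonomial_mergeLabellings h₁ h₂ ▸ refines_labelMonomial (pairwise_mergeLabellings u v d₁ d₂)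

lemma splitMonomial_mergeLabellings (hd : ∀ x ∈ u, ∀ y ∈ v, x ≠ y) {d₁ d₂ : ℕ →₀ ℕ}
    (h₁ : Refines (expComp d₁) (descComp u)) (h₂ : Refines (expComp d₂) (descComp v)) :
    splitMonomial u (d₁ + d₂) ((mergeLabellings u v d₁ d₂).map Prod.fst) = (d₁, d₂) := by
  obtain ⟨e₁, e₂⟩ := filter_mergeLabellings hd h₁ h₂
  rw [splitMonomial, ← labelMonomial_mergeLabellings h₁ h₂,
    zip_varWord_labelMonomial (pairwise_mergeLabellings u v d₁ d₂), e₁, e₂,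
    labelMonomial_zip_varWord ((refines_expComp_descComp_iff _ _).mp h₁).1,
    labelMonomial_zip_varWord ((refines_expComp_descComp_iff _ _).mp h₂).1]

lemma map_fst_filter_zip_varWord (hd : ∀ x ∈ u, ∀ y ∈ v, x ≠ y) {d : ℕ →₀ ℕ} {w : List ℕ}
    (hw : w ∈ shuffles u v) (hc : Refines (expComp d) (descComp w)) :
    ((w.zip (varWord d)).filter (·.1 ∈ u)).map Prod.fst = u ∧
      ((w.zip (varWord d)).filter (·.1 ∉ u)).map Prod.fst = v := by
  have hw' : (w.zip (varWord d)).map Prod.fst = w :=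
    List.map_fst_zip ((refines_expComp_descComp_iff _ _).mp hc).1.ge
  obtain ⟨h₁, h₂⟩ := filter_of_mem_shuffles hd hw
  rw [← hw', List.filter_map] at h₁ h₂
  exact ⟨h₁, h₂⟩

lemma zip_varWord_splitMonomial (hd : ∀ x ∈ u, ∀ y ∈ v, x ≠ y) {d : ℕ →₀ ℕ} {w : List ℕ}
    (hw : w ∈ shuffles u v) (hc : Refines (expComp d) (descComp w)) :
    u.zip (varWord (splitMonomial u d w).1) = (w.zip (varWord d)).filter (·.1 ∈ u) ∧
      v.zip (varWord (splitMonomial u d w).2) = (w.zip (varWord d)).filter (·.1 ∉ u) := by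
  have hL := ((refines_expComp_descComp_iff _ _).mp hc).2
  obtain ⟨h₁, h₂⟩ := map_fst_filter_zip_varWord hd hw hc
  have e₁ := zip_varWord_labelMonomial (hL.filter fun p => decide (p.1 ∈ u))
  have e₂ := zip_varWord_labelMonomial (hL.filter fun p => decide (p.1 ∉ u))
  rw [h₁] at e₁
  rw [h₂] at e₂
  exact ⟨e₁, e₂⟩

lemma refines_splitMonomial (hd : ∀ x ∈ u, ∀ y ∈ v, x ≠ y) {d : ℕ →₀ ℕ} {w : List ℕ}
    (hw : w ∈ shuffles u v) (hc : Refines (expComp d) (descComp w)) :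
    Refines (expComp (splitMonomial u d w).1) (descComp u) ∧
      Refines (expComp (splitMonomial u d w).2) (descComp v) := by
  have hL := ((refines_expComp_descComp_iff _ _).mp hc).2
  obtain ⟨h₁, h₂⟩ := map_fst_filter_zip_varWord hd hw hc
  have r₁ := refines_labelMonomial (hL.filter fun p => decide (p.1 ∈ u))
  have r₂ := refines_labelMonomial (hL.filter fun p => decide (p.1 ∉ u))
  rw [h₁] at r₁
  rw [h₂] at r₂
  exact ⟨r₁, r₂⟩

lemma perm_filter_append_filter_not (p : ℕ → Prop) [DecidablePred p] (L : List (ℕ × ℕ)) :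
    (L.filter (fun q => decide (p q.1)) ++ L.filter (fun q => decide (¬ p q.1))).Perm L := by
  simpa only [decide_not] using List.filter_append_perm (fun q => decide (p q.1)) L

lemma splitMonomial_add {d : ℕ →₀ ℕ} {w : List ℕ} (hc : Refines (expComp d) (descComp w)) :
    (splitMonomial u d w).1 + (splitMonomial u d w).2 = d := by
  rw [splitMonomial, ← labelMonomial_append,
    labelMonomial_of_perm (perm_filter_append_filter_not (· ∈ u) _),
    labelMonomial_zip_varWord ((refines_expComp_descComp_iff _ _).mp hc).1]

lemma mergeLabellings_splitMonomial (hd : ∀ x ∈ u, ∀ y ∈ v, x ≠ y) {d : ℕ →₀ ℕ} {w : List ℕ}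
    (hw : w ∈ shuffles u v) (hc : Refines (expComp d) (descComp w)) :
    (mergeLabellings u v (splitMonomial u d w).1 (splitMonomial u d w).2).map Prod.fst = w := by
  obtain ⟨hlen, hL⟩ := (refines_expComp_descComp_iff _ _).mp hc
  obtain ⟨e₁, e₂⟩ := zip_varWord_splitMonomial hd hw hc
  rw [mergeLabellings, e₁, e₂, Multiset.coe_add,
    Multiset.coe_eq_coe.mpr (perm_filter_append_filter_not (· ∈ u) _),
    Multiset.sort_coe_of_pairwise hL, List.map_fst_zip hlen.ge]

theorem card_filter_antidiagonal_refines (hd : ∀ x ∈ u, ∀ y ∈ v, x ≠ y) (d : ℕ →₀ ℕ) :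
    ((Finset.HasAntidiagonal.antidiagonal d).filter fun p =>
        Refines (expComp p.1) (descComp u) ∧ Refines (expComp p.2) (descComp v)).card =
      ((⟨shuffles u v, nodup_shuffles hd⟩ : Finset (List ℕ)).filter fun w =>
        Refines (expComp d) (descComp w)).card := by
  refine Finset.card_bij' (fun p _ => (mergeLabellings u v p.1 p.2).map Prod.fst)
    (fun w _ => splitMonomial u d w) ?_ ?_ ?_ ?_
  · rintro ⟨d₁, d₂⟩ hp
    obtain ⟨hsum, h₁, h₂⟩ := Finset.mem_filter.mp hp
    obtain rfl := Finset.HasAntidiagonal.mem_antidiagonal.mp hsum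
    exact Finset.mem_filter.mpr
      ⟨mergeLabellings_mem_shuffles hd h₁ h₂, refines_mergeLabellings h₁ h₂⟩
  · intro w hw
    obtain ⟨hw, hc⟩ := Finset.mem_filter.mp hw
    exact Finset.mem_filter.mpr
      ⟨Finset.HasAntidiagonal.mem_antidiagonal.mpr (splitMonomial_add hc),
        refines_splitMonomial hd hw hc⟩
  · rintro ⟨d₁, d₂⟩ hp
    obtain ⟨hsum, h₁, h₂⟩ := Finset.mem_filter.mp hp
    obtain rfl := Finset.HasAntidiagonal.mem_antidiagonal.mp hsum
    exact splitMonomial_mergeLabellings hd h₁ h₂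
  · intro w hw
    obtain ⟨hw, hc⟩ := Finset.mem_filter.mp hw
    exact mergeLabellings_splitMonomial hd hw hc

end Bijection

lemma coeff_Fqs (K : Type) [Field K] (γ : List ℕ) (d : ℕ →₀ ℕ) :
    MvPowerSeries.coeff d (Fqs K γ) = if Refines (expComp d) γ then 1 else 0 :=
  rfl

theorem fundamental_qsym_product_general (K : Type) [Field K]
    (α β : List ℕ) (wα wβ : List ℕ)
    (hdisj : ∀ x ∈ wα, ∀ y ∈ wβ, x ≠ y)
    (hdα : descComp wα = α) (hdβ : descComp wβ = β) :
    Fqs K α * Fqs K β =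
      ((shuffles wα wβ).map (fun w => Fqs K (descComp w))).sum := by
  subst hdα hdβ
  ext d
  have hS : ((shuffles wα wβ).map fun w => Fqs K (descComp w)).sum =
      ∑ w ∈ (⟨shuffles wα wβ, nodup_shuffles hdisj⟩ : Finset (List ℕ)), Fqs K (descComp w) :=
    rfl
  rw [hS, MvPowerSeries.coeff_mul, map_sum]
  simp only [coeff_Fqs, ite_zero_mul_ite_zero, mul_one, Finset.sum_boole]
  exact congrArg Nat.cast (card_filter_antidiagonal_refines hdisj d)

/-- if `w_α`, `w_β` are words on disjoint alphabets with distinct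
letters whose descent compositions are `α ⊨ m` and `β ⊨ n`, then
`F_α · F_β = ∑_{w ∈ w_α ⧢ w_β} F_{Des w}`, summed over all shuffles of the two
words. -/
theorem fundamental_qsym_product (K : Type) [Field K] (m n : ℕ)
    (α β : List ℕ) (wα wβ : List ℕ)
    (hm : α.sum = m) (hn : β.sum = n)
    (hwα : wα.Nodup) (hwβ : wβ.Nodup)
    (hdisj : ∀ x ∈ wα, ∀ y ∈ wβ, x ≠ y)
    (hdα : descComp wα = α) (hdβ : descComp wβ = β) :
    Fqs K α * Fqs K β =
      ((shuffles wα wβ).map (fun w => Fqs K (descComp w))).sum :=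
  fundamental_qsym_product_general K α β wα wβ hdisj hdα hdβ
end

section
/- In NSym, for n ≥ 1 and k ≥ 0, the antipode of the hook immaculate function satisfies S(𝒮_{(n,1^k)}) = (-1)^{n+k} 𝒮_{(k+1,1^{n-1})}, where (n,1^k) denotes the composition with first part n followed by k parts equal to 1. -/
/-!
Let `E` be the power series inverse to `H(t) = ∑ Hₘ tᵐ`. The first column of the matrix of
`𝒮_{(n,1^{k+1})}` has only two nonzero entries, `Hₙ` on top and `H₀ = 1` below it, so expanding
along it gives `𝒮_{(n,1^{k+1})} = Hₙ 𝒮_{(1^{k+1})} - 𝒮_{(n+1,1^k)}`, and by induction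
`𝒮_{(n,1^k)} = (-1)^k ∑_{i ≤ k} H_{n+i} E_{k-i}`.

The antipode axiom applied to `Δ Hₘ` says that `m ↦ S(Hₘ)` is a two-sided inverse of `H`, i.e.
`S(Hₘ) = Eₘ`; since `S` reverses products, `m ↦ S(Eₘ)` is then a left inverse of `E`, so
`S(Eₘ) = Hₘ`. Hence `S(𝒮_{(n,1^k)}) = (-1)^k ∑_{i ≤ k} H_{k-i} E_{n+i}`, which is one half of the
coefficient of `t^{n+k}` in `H E = 1`; the other half is the expansion of `𝒮_{(k+1,1^{n-1})}`.
-/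

open TensorProduct

/-- The immaculate function `𝒮_α` for a composition `α` (as a list), defined as
the noncommutative determinant `Det(H_{α_i + j - i})` with factors in row
order, where `H_m = 0` for `m < 0`. -/
noncomputable def immaculate {N : Type} [Ring N] (Hh : ℕ → N) (α : List ℕ) : N :=
  ∑ σ : Equiv.Perm (Fin α.length), ((Equiv.Perm.sign σ : ℤˣ) : ℤ) •
    ((List.finRange α.length).map (fun (i : Fin α.length) =>
      if (i : ℕ) ≤ α.get i + (σ i : ℕ) then Hh (α.get i + (σ i : ℕ) - (i : ℕ))
      else 0)).prod

open Equiv Equiv.Perm Finset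

namespace Equiv.Perm

variable {n : ℕ}

theorem decomposeFin_symm_eq_swap_mul (p : Fin (n + 1)) (e : Perm (Fin n)) :
    decomposeFin.symm (p, e) = swap 0 p * decomposeFin.symm (0, e) := by
  ext x
  refine Fin.cases ?_ (fun y => ?_) x <;>
    simp [decomposeFin_symm_apply_zero, decomposeFin_symm_apply_succ]

theorem decomposeFin_symm_zero_inv (e : Perm (Fin n)) :
    decomposeFin.symm (0, e⁻¹) = (decomposeFin.symm (0, e))⁻¹ := by
  rw [eq_inv_iff_mul_eq_one]
  ext x
  refine Fin.cases ?_ (fun y => ?_) x <;>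
    simp [decomposeFin_symm_apply_zero, decomposeFin_symm_apply_succ]

/-- `p` is the row that the permutation sends to column `0`. -/
theorem sum_perm_fin_succ {M : Type*} [AddCommMonoid M] (f : Perm (Fin (n + 1)) → M) :
    ∑ σ, f σ = ∑ p, ∑ e : Perm (Fin n), f (decomposeFin.symm (0, e) * swap 0 p) := by
  rw [← Equiv.sum_comp (Equiv.inv _), ← Equiv.sum_comp decomposeFin.symm, Fintype.sum_prod_type]
  refine Fintype.sum_congr _ _ fun p => ?_
  rw [← Equiv.sum_comp (Equiv.inv _)]
  refine Fintype.sum_congr _ _ fun e => ?_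
  simp only [Equiv.inv_apply]
  rw [decomposeFin_symm_eq_swap_mul, mul_inv_rev, decomposeFin_symm_zero_inv, inv_inv, swap_inv]

end Equiv.Perm

namespace Matrix

variable {R : Type*} [Ring R] {m : ℕ}

def rowDet (A : Matrix (Fin m) (Fin m) R) : R :=
  ∑ σ : Perm (Fin m), ((sign σ : ℤˣ) : ℤ) • (List.ofFn fun i => A i (σ i)).prod

theorem rowDet_eq_mul_sub_of_col_zero (A : Matrix (Fin (m + 2)) (Fin (m + 2)) R)
    (h10 : A 1 0 = 1) (hcol : ∀ i : Fin m, A i.succ.succ 0 = 0) :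
    rowDet A = A 0 0 * rowDet (A.submatrix Fin.succ Fin.succ) -
      rowDet (A.submatrix (Fin.succAbove 1) Fin.succ) := by
  have hzero (q : Fin m) (e : Perm (Fin (m + 1))) :
      (List.ofFn fun i => A i ((decomposeFin.symm (0, e) * Equiv.swap 0 q.succ.succ) i)).prod = 0 :=
    List.prod_eq_zero (List.mem_ofFn.2 ⟨q.succ.succ, by simp [hcol]⟩)
  have hswap (i : Fin m) : Equiv.swap 0 1 i.succ.succ = i.succ.succ :=
    Equiv.swap_apply_of_ne_of_ne (Fin.succ_ne_zero _) (Fin.succ_injective _ |>.ne (Fin.succ_ne_zero _))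
  rw [rowDet, Perm.sum_perm_fin_succ, Fin.sum_univ_succ, Fin.sum_univ_succ]
  simp only [hzero, smul_zero, sum_const_zero, add_zero]
  simp [rowDet, mul_sum, sub_eq_add_neg, List.ofFn_succ, h10, hswap, Int.cast_comm, mul_assoc]

end Matrix

namespace PowerSeries

section Semiring

variable {R : Type*} [Semiring R]

theorem coeff_mk_mul_mk (f g : ℕ → R) (m : ℕ) :
    coeff m (mk f * mk g) = ∑ i ∈ range (m + 1), f i * g (m - i) := by
  rw [coeff_mul, Finset.Nat.sum_antidiagonal_eq_sum_range_succ_mk]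
  simp

theorem sum_range_mul_eq_ite_of_mk_mul_mk_eq_one {f g : ℕ → R} (hfg : mk f * mk g = 1) (m : ℕ) :
    ∑ i ∈ range (m + 1), f i * g (m - i) = if m = 0 then 1 else 0 := by
  rw [← coeff_mk_mul_mk, hfg, coeff_one]

end Semiring

theorem sum_range_reflect_mul_eq_neg_of_mk_mul_mk_eq_one {R : Type*} [Ring R] {f g : ℕ → R}
    (hfg : mk f * mk g = 1) (n k : ℕ) :
    ∑ i ∈ range (k + 1), f (k - i) * g (n + 1 + i) =
      -∑ j ∈ range (n + 1), f (k + 1 + j) * g (n - j) := by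
  have := sum_range_mul_eq_ite_of_mk_mul_mk_eq_one hfg (k + 1 + n)
  rw [if_neg (by omega), add_assoc, sum_range_add, ← sum_range_reflect] at this
  rw [eq_neg_iff_add_eq_zero, ← this]
  congr 1 <;> refine sum_congr rfl fun i hi => ?_ <;> have := mem_range.1 hi <;> congr 2 <;> omega

end PowerSeries

section Immaculate

open Matrix PowerSeries

variable {N : Type} [Ring N] (Hh : ℕ → N)

def immaculateMatrix {m : ℕ} (a : Fin m → ℕ) : Matrix (Fin m) (Fin m) N :=
  Matrix.of fun i j => if (i : ℕ) ≤ a i + j then Hh (a i + j - i) else 0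

theorem immaculate_eq_rowDet {α : List ℕ} {m : ℕ} (a : Fin m → ℕ) (hlen : α.length = m)
    (ha : ∀ i : Fin m, α[i] = a i) : immaculate Hh α = rowDet (immaculateMatrix Hh a) := by
  subst hlen
  obtain rfl : a = α.get := funext fun i => (ha i).symm
  simp [immaculate, rowDet, immaculateMatrix, List.ofFn_eq_map]

theorem immaculateMatrix_submatrix_succ {m : ℕ} (a : Fin (m + 1) → ℕ) :
    (immaculateMatrix Hh a).submatrix Fin.succ Fin.succ = immaculateMatrix Hh (Fin.tail a) := by
  ext i j
  simp only [immaculateMatrix, submatrix_apply, of_apply, Fin.val_succ, Fin.tail]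
  congr 1
  · simp only [eq_iff_iff]; omega
  · congr 1; omega

theorem immaculateMatrix_submatrix_one_succAbove {m : ℕ} (a : Fin (m + 2) → ℕ) :
    (immaculateMatrix Hh a).submatrix (Fin.succAbove 1) Fin.succ =
      immaculateMatrix Hh (Fin.cons (a 0 + 1) (Fin.tail (Fin.tail a))) := by
  ext i j
  refine Fin.cases ?_ (fun i => ?_) i
  · simp [immaculateMatrix, add_assoc, add_comm 1]
  · simp only [immaculateMatrix, submatrix_apply, of_apply, Fin.one_succAbove_succ, Fin.val_succ,
      Fin.cons_succ, Fin.tail]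
    congr 1
    · simp only [eq_iff_iff]; omega
    · congr 1; omega

theorem immaculate_cons_replicate (n k : ℕ) :
    immaculate Hh (n :: List.replicate k 1) =
      rowDet (immaculateMatrix Hh (Fin.cons n fun _ : Fin k => 1)) :=
  immaculate_eq_rowDet Hh _ (by simp) fun i => Fin.cases rfl (fun i => by simp) i

theorem immaculate_singleton (n : ℕ) : immaculate Hh [n] = Hh n := by
  rw [← List.replicate_zero (a := 1), immaculate_cons_replicate]
  simp [rowDet, immaculateMatrix]

theorem immaculate_cons_replicate_succ (h0 : Hh 0 = 1) (n k : ℕ) :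
    immaculate Hh (n :: List.replicate (k + 1) 1) =
      Hh n * immaculate Hh (1 :: List.replicate k 1) -
        immaculate Hh ((n + 1) :: List.replicate k 1) := by
  have htail : Fin.tail (Fin.cons n fun _ => 1 : Fin (k + 2) → ℕ) =
      (Fin.cons 1 fun _ => 1 : Fin (k + 1) → ℕ) :=
    funext fun i => Fin.cases rfl (fun _ => rfl) i
  simp only [immaculate_cons_replicate]
  rw [rowDet_eq_mul_sub_of_col_zero, immaculateMatrix_submatrix_succ,
    immaculateMatrix_submatrix_one_succAbove, htail]
  · simp [immaculateMatrix]
  · simp [immaculateMatrix, h0]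
  · intro i
    simp [immaculateMatrix]

theorem immaculate_cons_replicate_eq_sum {E : ℕ → N} (h0 : Hh 0 = 1)
    (hHE : mk Hh * mk E = 1) (n k : ℕ) :
    immaculate Hh (n :: List.replicate k 1) =
      (-1 : ℤ) ^ k • ∑ i ∈ range (k + 1), Hh (n + i) * E (k - i) := by
  have hE0 : E 0 = 1 := by
    simpa [h0] using sum_range_mul_eq_ite_of_mk_mul_mk_eq_one hHE 0
  have hsum (k : ℕ) : ∑ i ∈ range (k + 1), Hh (1 + i) * E (k - i) = -E (k + 1) := by
    have := sum_range_mul_eq_ite_of_mk_mul_mk_eq_one hHE (k + 1)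
    rw [sum_range_succ', h0, one_mul, if_neg k.succ_ne_zero] at this
    rw [eq_neg_iff_add_eq_zero, ← this]
    simp [add_comm 1]
  induction k generalizing n with
  | zero => simp [immaculate_singleton, hE0]
  | succ k ih =>
    rw [immaculate_cons_replicate_succ Hh h0, ih, ih, hsum, sum_range_succ' _ (k + 1)]
    simp only [add_assoc, add_comm 1, Nat.add_sub_add_right, add_zero, Nat.sub_zero]
    rw [mul_smul_comm, mul_neg, pow_succ]
    module

end Immaculate

section Antipode

open HopfAlgebra Coalgebra PowerSeries

variable {K : Type*} {A : Type*} [CommSemiring K] [Ring A] [HopfAlgebra K A]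

theorem antipode_coeff_mk_mul_mk (f g : ℕ → A) (m : ℕ) :
    antipode K (coeff m (mk f * mk g)) =
      coeff m (mk (fun i => antipode K (g i)) * mk (fun i => antipode K (f i))) := by
  simp only [coeff_mul, coeff_mk, map_sum, antipode_mul_antidistrib]
  exact Finset.Nat.sum_antidiagonal_swap (f := fun p => antipode K (g p.1) * antipode K (f p.2))

variable {H : ℕ → A}
  (hcomul : ∀ m, comul (R := K) (H m) = ∑ i ∈ range (m + 1), H i ⊗ₜ[K] H (m - i))
  (hcounit : ∀ m, counit (R := K) (H m) = if m = 0 then 1 else 0)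
include hcomul hcounit

theorem mk_antipode_mul_mk_eq_one : mk (fun m => antipode K (H m)) * mk H = 1 := by
  ext m
  have := mul_antipode_rTensor_comul_apply (R := K) (H m)
  rw [hcomul, hcounit] at this
  rw [coeff_mk_mul_mk, coeff_one]
  simpa [map_sum, apply_ite] using this

theorem mk_mul_mk_antipode_eq_one : mk H * mk (fun m => antipode K (H m)) = 1 := by
  ext m
  have := mul_antipode_lTensor_comul_apply (R := K) (H m)
  rw [hcomul, hcounit] at this
  rw [coeff_mk_mul_mk, coeff_one]
  simpa [map_sum, apply_ite] using this

theorem antipode_antipode_of_comul_eq (m : ℕ) : antipode K (antipode K (H m)) = H m := by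
  have hinv : mk (fun i => antipode K (antipode K (H i))) * mk (fun i => antipode K (H i)) = 1 := by
    ext i
    rw [← antipode_coeff_mk_mul_mk, mk_mul_mk_antipode_eq_one hcomul hcounit, coeff_one]
    split_ifs <;> simp
  have := left_inv_eq_right_inv hinv (mk_antipode_mul_mk_eq_one hcomul hcounit)
  simpa using congrArg (coeff m) this

end Antipode

/-- in `NSym`, for `n ≥ 1` and `k ≥ 0`, the antipode of the hook
immaculate function satisfies `S(𝒮_{(n,1^k)}) = (-1)^{n+k} 𝒮_{(k+1,1^{n-1})}`. -/
theorem nsym_antipode_hook (K : Type) [Field K] (N : Type) [Ring N]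
    [HopfAlgebra K N] (Hh : ℕ → N)
    (h0 : Hh 0 = 1)
    (hcomul : ∀ m : ℕ, Coalgebra.comul (R := K) (Hh m) =
      ∑ i ∈ Finset.range (m + 1), Hh i ⊗ₜ[K] Hh (m - i))
    (hcounit : ∀ m : ℕ,
      Coalgebra.counit (R := K) (Hh m) = if m = 0 then (1 : K) else 0)
    (n k : ℕ) (hn : 1 ≤ n) :
    HopfAlgebra.antipode (R := K) (immaculate Hh (n :: List.replicate k 1)) =
      ((-1 : ℤ) ^ (n + k)) • immaculate Hh ((k + 1) :: List.replicate (n - 1) 1) := by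
  obtain ⟨n, rfl⟩ : ∃ m, n = m + 1 := ⟨n - 1, by omega⟩
  have hHE := mk_mul_mk_antipode_eq_one hcomul hcounit
  rw [immaculate_cons_replicate_eq_sum Hh h0 hHE, immaculate_cons_replicate_eq_sum Hh h0 hHE,
    map_zsmul, map_sum]
  simp only [HopfAlgebra.antipode_mul_antidistrib, antipode_antipode_of_comul_eq hcomul hcounit,
    Nat.add_sub_cancel, PowerSeries.sum_range_reflect_mul_eq_neg_of_mk_mul_mk_eq_one hHE, smul_smul, smul_neg, ← neg_smul]
  congr 1
  rw [← pow_add, show n + 1 + k + n = k + 1 + 2 * n by ring, pow_add, pow_mul, pow_succ]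
  simp
end

section
/- In the Malvenuto-Reutenauer Hopf algebra SSym, the coefficient of the identity permutation in the antipode of σ ∈ S_n is (-1)^n if σ = n(n-1)...1 and 0 otherwise: [12...n]S(σ) = (-1)^n if σ is the decreasing permutation, else 0. -/
open TensorProduct

/-- Standardization of a word of distinct letters: replace the smallest letter
by `1`, the next smallest by `2`, and so on. -/
def stw (w : List ℕ) : List ℕ :=
  w.map (fun a => (w.filter (· < a)).length + 1)

/-- `w` is the one-line notation of a permutation of `{1, …, n}` where
`n = w.length`. -/
def IsPermList (w : List ℕ) : Prop := w.Perm (List.range' 1 w.length)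

/-!
Let `Pₙ` be the span of the basis elements indexed by permutations of length `n`. Shuffling
respects this grading, and the identity of length `i + m` occurs in the shuffle product of
permutations of lengths `i` and `m` exactly once if both are identities and never otherwise;
hence the coefficient of the identity is multiplicative on `Pᵢ × Pₘ`. Feeding this into the
antipode recursion `S(σ) = -∑_{i<n} S(st(σ₁⋯σᵢ)) · st(σᵢ₊₁⋯σₙ)` and inducting on `n`, the
coefficient of the identity in `S(σ)` is `-∑_{i<n} (-1)^i` over the cuts `i` splitting `σ` into
a decreasing prefix and an increasing suffix. Such cuts come in pairs `i, i + 1` (move the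
minimum of `σ` across the cut), so the sum over `0 ≤ i ≤ n` vanishes and only the term `i = n`
survives.
-/

section Shuffles

variable {α : Type*}

theorem mem_shuffles_append (v w : List α) : v ++ w ∈ shuffles v w := by
  induction v, w using shuffles.induct with
  | case1 w => simp [shuffles]
  | case2 a v => simp [shuffles]
  | case3 a v b w ih _ =>
    rw [shuffles]
    exact Multiset.mem_add.2 (Or.inl (Multiset.mem_map_of_mem _ ih))

theorem perm_of_mem_shuffles_s19 {v w x : List α} (h : x ∈ shuffles v w) : x.Perm (v ++ w) := by
  induction v, w using shuffles.induct generalizing x with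
  | case1 w => simp_all [shuffles]
  | case2 a v => simp_all [shuffles]
  | case3 a v b w ih₁ ih₂ =>
    rw [shuffles] at h
    rcases Multiset.mem_add.1 h with h | h <;> obtain ⟨y, hy, rfl⟩ := Multiset.mem_map.1 h
    · exact (ih₁ hy).cons a
    · exact ((ih₂ hy).cons b).trans List.perm_middle.symm

theorem sublist_left_of_mem_shuffles {v w x : List α} (h : x ∈ shuffles v w) : v.Sublist x := by
  induction v, w using shuffles.induct generalizing x with
  | case1 w => simp
  | case2 a v => simp_all [shuffles]
  | case3 a v b w ih₁ ih₂ =>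
    rw [shuffles] at h
    rcases Multiset.mem_add.1 h with h | h <;> obtain ⟨y, hy, rfl⟩ := Multiset.mem_map.1 h
    · exact (ih₁ hy).cons_cons a
    · exact (ih₂ hy).cons b

theorem sublist_right_of_mem_shuffles {v w x : List α} (h : x ∈ shuffles v w) : w.Sublist x := by
  induction v, w using shuffles.induct generalizing x with
  | case1 w => simp_all [shuffles]
  | case2 a v => simp
  | case3 a v b w ih₁ ih₂ =>
    rw [shuffles] at h
    rcases Multiset.mem_add.1 h with h | h <;> obtain ⟨y, hy, rfl⟩ := Multiset.mem_map.1 h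
    · exact (ih₁ hy).cons a
    · exact (ih₂ hy).cons_cons b

theorem nodup_shuffles_s19 {v w : List α} (h : (v ++ w).Nodup) : (shuffles v w).Nodup := by
  induction v, w using shuffles.induct with
  | case1 w => simp [shuffles]
  | case2 a v => simp [shuffles]
  | case3 a v b w ih₁ ih₂ =>
    have hab : a ≠ b := by
      rintro rfl
      simp at h
    rw [shuffles, Multiset.nodup_add]
    refine ⟨(ih₁ (h.sublist (by simp))).map List.cons_injective,
      (ih₂ (h.sublist (by simp))).map List.cons_injective, Multiset.disjoint_left.2 ?_⟩
    simp only [Multiset.mem_map]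
    rintro _ ⟨y, -, rfl⟩ ⟨z, -, hz⟩
    exact hab (List.cons.inj hz).1.symm

end Shuffles

theorem map_add_range'_right (a s n : ℕ) :
    (List.range' s n).map (· + a) = List.range' (s + a) n := by
  simpa [Nat.add_comm] using List.map_add_range' (a := a) s n 1

theorem isPermList_range' (n : ℕ) : IsPermList (List.range' 1 n) := by
  simp [IsPermList]

namespace IsPermList

variable {v w : List ℕ}

theorem nodup (hw : IsPermList w) : w.Nodup :=
  hw.nodup_iff.2 List.nodup_range'

theorem of_perm (hv : IsPermList v) (h : w.Perm v) : IsPermList w := by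
  rw [IsPermList, h.length_eq]
  exact h.trans hv

theorem eq_range'_iff (hw : IsPermList w) :
    w = List.range' 1 w.length ↔ w.Pairwise (· < ·) := by
  refine ⟨fun h => ?_, fun h => List.Perm.eq_of_pairwise' h List.pairwise_lt_range' hw⟩
  rw [h]
  exact List.pairwise_lt_range'

theorem eq_reverse_range'_iff (hw : IsPermList w) :
    w = (List.range' 1 w.length).reverse ↔ w.Pairwise (· > ·) := by
  have hrev : IsPermList w.reverse := hw.of_perm w.reverse_perm
  rw [← List.reverse_eq_iff, ← List.length_reverse (as := w), hrev.eq_range'_iff,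
    List.pairwise_reverse]

theorem append_map_add (hv : IsPermList v) (hw : IsPermList w) :
    IsPermList (v ++ w.map (· + v.length)) := by
  have hshift : (w.map (· + v.length)).Perm (List.range' (1 + v.length) w.length) :=
    map_add_range'_right v.length 1 w.length ▸ hw.map _
  rw [IsPermList, List.length_append, List.length_map, ← List.range'_append_1]
  exact hv.append hshift

theorem of_mem_shuffles (hv : IsPermList v) (hw : IsPermList w) {x : List ℕ}
    (hx : x ∈ shuffles v (w.map (· + v.length))) :
    IsPermList x ∧ x.length = v.length + w.length := by
  have hperm := perm_of_mem_shuffles_s19 hx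
  exact ⟨(hv.append_map_add hw).of_perm hperm, by simpa using hperm.length_eq⟩

theorem range'_mem_shuffles_iff (hv : IsPermList v) (hw : IsPermList w) :
    List.range' 1 (v.length + w.length) ∈ shuffles v (w.map (· + v.length)) ↔
      v = List.range' 1 v.length ∧ w = List.range' 1 w.length := by
  constructor
  · intro h
    have hsorted := List.pairwise_lt_range' (s := 1) (n := v.length + w.length)
    refine ⟨hv.eq_range'_iff.2 (hsorted.sublist (sublist_left_of_mem_shuffles h)),
      hw.eq_range'_iff.2 ?_⟩
    have := hsorted.sublist (sublist_right_of_mem_shuffles h)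
    rwa [List.pairwise_map, List.Pairwise.iff (fun _ _ => Nat.add_lt_add_iff_right)] at this
  · rintro ⟨hv', hw'⟩
    have := mem_shuffles_append (List.range' 1 v.length) (List.range' (1 + v.length) w.length)
    rwa [List.range'_append_1, ← hv', ← map_add_range'_right, ← hw'] at this

end IsPermList

section Standardization

variable {w : List ℕ} {a b : ℕ}

theorem length_stw (w : List ℕ) : (stw w).length = w.length := List.length_map _

theorem filter_lt_sublist (w : List ℕ) (hab : a ≤ b) :
    (w.filter (· < a)).Sublist (w.filter (· < b)) :=
  List.monotone_filter_right w fun x hx => by simp at hx ⊢; omega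

theorem length_filter_lt_lt (ha : a ∈ w) (hab : a < b) :
    (w.filter (· < a)).length < (w.filter (· < b)).length := by
  have hsub := filter_lt_sublist w hab.le
  refine lt_of_le_of_ne hsub.length_le fun hlen => ?_
  have : a ∈ w.filter (· < a) := (hsub.eq_of_length hlen) ▸ List.mem_filter.2 ⟨ha, by simpa⟩
  simp at this

theorem length_filter_lt_lt_iff (ha : a ∈ w) :
    (w.filter (· < a)).length < (w.filter (· < b)).length ↔ a < b :=
  ⟨fun h => not_le.1 fun hba => h.not_ge (filter_lt_sublist w hba).length_le,
    length_filter_lt_lt ha⟩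

theorem pairwise_lt_stw_iff : (stw w).Pairwise (· < ·) ↔ w.Pairwise (· < ·) := by
  rw [stw, List.pairwise_map]
  exact List.Pairwise.iff_of_mem fun ha hb => by simpa using length_filter_lt_lt_iff ha

theorem pairwise_gt_stw_iff : (stw w).Pairwise (· > ·) ↔ w.Pairwise (· > ·) := by
  rw [stw, List.pairwise_map]
  exact List.Pairwise.iff_of_mem fun ha hb => by simpa using length_filter_lt_lt_iff hb

theorem isPermList_stw (hw : w.Nodup) : IsPermList (stw w) := by
  have hnodup : (stw w).Nodup := hw.map_on fun a ha b hb hab => by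
    by_contra hne
    rcases Nat.lt_or_gt_of_ne hne with h | h
    · exact (length_filter_lt_lt ha h).ne (by simpa using hab)
    · exact (length_filter_lt_lt hb h).ne' (by simpa using hab)
  have hsub : stw w ⊆ List.range' 1 w.length := by
    intro x hx
    obtain ⟨a, ha, rfl⟩ := List.mem_map.1 hx
    have : (w.filter (· < a)).length < w.length :=
      List.length_filter_lt_length_iff_exists.2 ⟨a, ha, by simp⟩
    simp only [List.mem_range'_1]
    omega
  rw [IsPermList, length_stw]
  exact (List.subperm_of_subset hnodup hsub).perm_of_length_le (by simp [length_stw])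

theorem IsPermList.isPermList_stw_take (hw : IsPermList w) (i : ℕ) :
    IsPermList (stw (w.take i)) :=
  isPermList_stw (hw.nodup.sublist (List.take_sublist i w))

theorem IsPermList.isPermList_stw_drop (hw : IsPermList w) (i : ℕ) :
    IsPermList (stw (w.drop i)) :=
  isPermList_stw (hw.nodup.sublist (List.drop_sublist i w))

theorem length_filter_lt_range' {n a : ℕ} (ha : a ≤ n + 1) :
    ((List.range' 1 n).filter (· < a)).length = a - 1 := by
  obtain ⟨k, rfl⟩ : ∃ k, n = (a - 1) + k := ⟨n - (a - 1), by omega⟩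
  rw [← List.range'_append_1, List.filter_append, List.filter_eq_self.2, List.filter_eq_nil_iff.2]
  · simp
  all_goals intro x hx; simp only [List.mem_range'_1] at hx; simp; omega

theorem stw_eq_self (hw : IsPermList w) : stw w = w := by
  refine (List.map_congr_left fun a ha => ?_).trans (List.map_id w)
  obtain ⟨ha1, han⟩ := List.mem_range'_1.1 (hw.subset ha)
  rw [(hw.filter _).length_eq, length_filter_lt_range' (by omega), id]
  omega

end Standardization

section ValleySplit

variable {α : Type*} [LinearOrder α] {l : List α} {i : ℕ}

def IsValleySplit (l : List α) (i : ℕ) : Prop :=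
  (l.take i).Pairwise (· > ·) ∧ (l.drop i).Pairwise (· < ·)

instance (l : List α) (i : ℕ) : Decidable (IsValleySplit l i) :=
  inferInstanceAs (Decidable (_ ∧ _))

def IsLeftToRightMinAt (l : List α) (i : ℕ) : Prop :=
  ∃ h : i < l.length, ∀ x ∈ l.take i, l[i] < x

theorem isLeftToRightMinAt_zero (hl : l ≠ []) : IsLeftToRightMinAt l 0 :=
  ⟨List.length_pos_iff.2 hl, by simp⟩

theorem pairwise_gt_take_succ_iff (hi : i < l.length) :
    (l.take (i + 1)).Pairwise (· > ·) ↔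
      (l.take i).Pairwise (· > ·) ∧ ∀ x ∈ l.take i, l[i] < x := by
  rw [← List.take_concat_get' l i hi, List.pairwise_append]
  simp

theorem pairwise_lt_drop_iff (hi : i < l.length) :
    (l.drop i).Pairwise (· < ·) ↔
      (∀ y ∈ l.drop (i + 1), l[i] < y) ∧ (l.drop (i + 1)).Pairwise (· < ·) := by
  rw [List.drop_eq_getElem_cons hi, List.pairwise_cons]

theorem isValleySplit_length_iff : IsValleySplit l l.length ↔ l.Pairwise (· > ·) := by
  simp [IsValleySplit]

namespace IsValleySplit

theorem succ (h : IsValleySplit l i) (hm : IsLeftToRightMinAt l i) :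
    IsValleySplit l (i + 1) :=
  ⟨(pairwise_gt_take_succ_iff hm.1).2 ⟨h.1, hm.2⟩,
    h.2.sublist (List.drop_sublist_drop_left l (by omega))⟩

theorem not_isLeftToRightMinAt_succ (h : IsValleySplit l i) :
    ¬ IsLeftToRightMinAt l (i + 1) := by
  rintro ⟨hi, hmin⟩
  have hlt : l[i] < l[i + 1] :=
    ((pairwise_lt_drop_iff (by omega)).1 h.2).1 _
      (List.drop_eq_getElem_cons hi ▸ List.mem_cons_self)
  have hmem : l[i] ∈ l.take (i + 1) := by
    rw [← List.take_concat_get' l i (by omega)]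
    exact List.mem_concat_self
  exact (hmin l[i] hmem).not_gt hlt

theorem exists_pred (hl : l.Nodup) (hne : l ≠ []) (h : IsValleySplit l i) (hi : i ≤ l.length)
    (hm : ¬ IsLeftToRightMinAt l i) :
    ∃ j, i = j + 1 ∧ IsValleySplit l j ∧ IsLeftToRightMinAt l j := by
  obtain ⟨j, rfl⟩ : ∃ j, i = j + 1 := Nat.exists_eq_succ_of_ne_zero fun h0 =>
    hm (h0 ▸ isLeftToRightMinAt_zero hne)
  have hj : j < l.length := by omega
  obtain ⟨hdesc, hmin⟩ := (pairwise_gt_take_succ_iff hj).1 h.1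
  refine ⟨j, rfl, ⟨hdesc, (pairwise_lt_drop_iff hj).2 ⟨fun y hy => ?_, h.2⟩⟩, hj, hmin⟩
  have hj' : j + 1 < l.length := by
    by_contra hj'
    simp [List.drop_of_length_le (not_lt.1 hj')] at hy
  obtain ⟨x, hx, hxle⟩ : ∃ x ∈ l.take (j + 1), x ≤ l[j + 1] := by
    simpa [IsLeftToRightMinAt, hj'] using hm
  have hjx : l[j] ≤ x := by
    rw [← List.take_concat_get' l j hj, List.mem_append, List.mem_singleton] at hx
    exact hx.elim (fun hx => (hmin x hx).le) ge_of_eq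
  have hne : l[j] ≠ l[j + 1] := fun heq => by
    have := (hl.getElem_inj_iff).1 heq
    omega
  have hlt : l[j] < l[j + 1] := lt_of_le_of_ne (hjx.trans hxle) hne
  rw [List.drop_eq_getElem_cons hj', List.mem_cons] at hy
  rcases hy with rfl | hy
  · exact hlt
  · exact hlt.trans (((pairwise_lt_drop_iff hj').1 h.2).1 y hy)

end IsValleySplit

theorem sum_ite_isValleySplit_eq_zero {R : Type*} [Ring R] (hl : l.Nodup) (hne : l ≠ []) :
    ∑ i ∈ Finset.range (l.length + 1), (if IsValleySplit l i then (-1 : R) ^ i else 0) = 0 := by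
  classical
  rw [← Finset.sum_filter]
  refine Finset.sum_involution (fun i _ => if IsLeftToRightMinAt l i then i + 1 else i - 1)
    ?_ ?_ ?_ ?_
  all_goals
    intro i hi
    obtain ⟨hi, h⟩ := Finset.mem_filter.1 hi
    have hi : i ≤ l.length := Nat.lt_succ_iff.1 (Finset.mem_range.1 hi)
    by_cases hm : IsLeftToRightMinAt l i
    case pos => simp [hm, pow_succ, h.not_isLeftToRightMinAt_succ, h.succ hm, hm.1]
    case neg =>
      obtain ⟨j, rfl, hj, hmj⟩ := h.exists_pred hl hne hi hm
      simp [hm, hmj, pow_succ, hj, show j ≤ l.length by omega]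

section SSym

open Coalgebra

variable {K A : Type*}

def permSpan (K : Type*) [Semiring K] [AddCommMonoid A] [Module K A] (e : List ℕ → A) (n : ℕ) :
    Submodule K A :=
  Submodule.span K (e '' {w | IsPermList w ∧ w.length = n})

def IsDualFamily [Semiring K] [AddCommMonoid A] [Module K A]
    (coeff : List ℕ → (A →ₗ[K] K)) (e : List ℕ → A) : Prop :=
  ∀ v w : List ℕ, IsPermList v → IsPermList w → coeff v (e w) = if v = w then 1 else 0

def HasShuffleProduct [NonUnitalNonAssocSemiring A] (e : List ℕ → A) : Prop :=
  ∀ v w : List ℕ, IsPermList v → IsPermList w →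
    e v * e w = ((shuffles v (w.map (· + v.length))).map e).sum

def HasDeconcatenationCoproduct (K : Type*) [CommSemiring K] [AddCommMonoid A] [Module K A]
    [Coalgebra K A] (e : List ℕ → A) : Prop :=
  ∀ w : List ℕ, IsPermList w →
    comul (R := K) (e w) =
      ∑ i ∈ Finset.range (w.length + 1), e (stw (w.take i)) ⊗ₜ[K] e (stw (w.drop i))

def HasEmptyWordCounit (K : Type*) [CommSemiring K] [AddCommMonoid A] [Module K A]
    [Coalgebra K A] (e : List ℕ → A) : Prop :=
  ∀ w : List ℕ, IsPermList w → counit (R := K) (e w) = if w = [] then 1 else 0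

theorem apply_mem_permSpan [Semiring K] [AddCommMonoid A] [Module K A] {e : List ℕ → A}
    {w : List ℕ} (hw : IsPermList w) : e w ∈ permSpan K e w.length :=
  Submodule.subset_span ⟨w, ⟨hw, rfl⟩, rfl⟩

section Algebra

variable [CommSemiring K] [Semiring A] [Algebra K A] {e : List ℕ → A}

theorem mul_mem_permSpan (hmul : HasShuffleProduct e) {i m : ℕ} {x y : A}
    (hx : x ∈ permSpan K e i) (hy : y ∈ permSpan K e m) : x * y ∈ permSpan K e (i + m) := by
  have hxy := Submodule.mul_mem_mul hx hy
  rw [permSpan, permSpan, Submodule.span_mul_span] at hxy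
  refine Submodule.span_le.2 ?_ hxy
  rintro _ ⟨_, ⟨v, ⟨hv, rfl⟩, rfl⟩, _, ⟨w, ⟨hw, rfl⟩, rfl⟩, rfl⟩
  change e v * e w ∈ _
  rw [hmul v w hv hw]
  refine multiset_sum_mem _ fun z hz => ?_
  obtain ⟨x, hx, rfl⟩ := Multiset.mem_map.1 hz
  obtain ⟨hxp, hxl⟩ := hv.of_mem_shuffles hw hx
  exact hxl ▸ apply_mem_permSpan hxp

variable {coeff : List ℕ → (A →ₗ[K] K)}

theorem coeff_range'_apply_mul_apply (hcoeff : IsDualFamily coeff e) (hmul : HasShuffleProduct e)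
    {v w : List ℕ} (hv : IsPermList v) (hw : IsPermList w) :
    coeff (List.range' 1 (v.length + w.length)) (e v * e w) =
      coeff (List.range' 1 v.length) (e v) * coeff (List.range' 1 w.length) (e w) := by
  have hterm : ∀ x ∈ shuffles v (w.map (· + v.length)),
      coeff (List.range' 1 (v.length + w.length)) (e x) =
        if x = List.range' 1 (v.length + w.length) then 1 else 0 := fun x hx => by
    rw [hcoeff _ _ (isPermList_range' _) (hv.of_mem_shuffles hw hx).1]
    exact if_congr eq_comm rfl rfl
  rw [hmul v w hv hw, map_multiset_sum, Multiset.map_map, Function.comp_def,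
    Multiset.map_congr rfl hterm,
    Multiset.sum_map_eq_nsmul_single _ fun x hx _ => if_neg hx,
    Multiset.count_eq_of_nodup (nodup_shuffles_s19 (hv.append_map_add hw).nodup)]
  simp only [hv.range'_mem_shuffles_iff hw, hcoeff _ _ (isPermList_range' _) hv,
    hcoeff _ _ (isPermList_range' _) hw, if_pos, ite_smul, one_smul, zero_smul,
    ite_zero_mul_ite_zero, mul_one]
  exact if_congr (and_congr eq_comm eq_comm) rfl rfl

theorem coeff_range'_mul (hcoeff : IsDualFamily coeff e) (hmul : HasShuffleProduct e)
    {i m : ℕ} {x y : A} (hx : x ∈ permSpan K e i) (hy : y ∈ permSpan K e m) :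
    coeff (List.range' 1 (i + m)) (x * y) =
      coeff (List.range' 1 i) x * coeff (List.range' 1 m) y := by
  induction hx using Submodule.span_induction with
  | mem x hx =>
    obtain ⟨v, ⟨hv, rfl⟩, rfl⟩ := hx
    induction hy using Submodule.span_induction with
    | mem y hy =>
      obtain ⟨w, ⟨hw, rfl⟩, rfl⟩ := hy
      exact coeff_range'_apply_mul_apply hcoeff hmul hv hw
    | zero => simp
    | add y z _ _ hy hz => simp [mul_add, hy, hz]
    | smul c y _ hy => simp [hy, mul_left_comm c]
  | zero => simp
  | add x z _ _ hx hz => simp [add_mul, hx, hz]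
  | smul c x _ hx => simp [hx, mul_assoc]

end Algebra

section Hopf

variable [CommRing K] [Ring A] [HopfAlgebra K A] {e : List ℕ → A}

theorem antipode_apply_eq_neg_sum (hone : e [] = 1) (hcomul : HasDeconcatenationCoproduct K e)
    (hcounit : HasEmptyWordCounit K e) {σ : List ℕ} (hσ : IsPermList σ) (hne : σ ≠ []) :
    HopfAlgebra.antipode K (e σ) =
      -∑ i ∈ Finset.range σ.length,
        HopfAlgebra.antipode K (e (stw (σ.take i))) * e (stw (σ.drop i)) := by
  have h := HopfAlgebra.mul_antipode_rTensor_comul_apply (R := K) (e σ)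
  rw [hcomul σ hσ, hcounit σ hσ, if_neg hne, map_zero, map_sum, map_sum,
    Finset.sum_range_succ, List.take_length, List.drop_length, stw_eq_self hσ] at h
  simp only [LinearMap.rTensor_tmul, LinearMap.mul'_apply] at h
  rw [show stw [] = [] from rfl, hone, mul_one] at h
  exact eq_neg_of_add_eq_zero_right h

theorem antipode_apply_mem_permSpan (hone : e [] = 1) (hmul : HasShuffleProduct e)
    (hcomul : HasDeconcatenationCoproduct K e) (hcounit : HasEmptyWordCounit K e)
    {σ : List ℕ} (hσ : IsPermList σ) : HopfAlgebra.antipode K (e σ) ∈ permSpan K e σ.length := by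
  induction hn : σ.length using Nat.strong_induction_on generalizing σ with
  | _ n ih =>
  rcases eq_or_ne σ [] with rfl | hne
  · subst hn
    rw [hone, HopfAlgebra.antipode_one, ← hone]
    exact apply_mem_permSpan (isPermList_range' 0)
  rw [antipode_apply_eq_neg_sum hone hcomul hcounit hσ hne]
  refine neg_mem (sum_mem fun i hi => ?_)
  have hi : i < n := hn ▸ Finset.mem_range.1 hi
  have := mul_mem_permSpan hmul (ih i hi (hσ.isPermList_stw_take i) (by simp [length_stw]; omega))
    (apply_mem_permSpan (hσ.isPermList_stw_drop i))
  rwa [length_stw, List.length_drop, hn, Nat.add_sub_cancel' hi.le] at this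

theorem coeff_range'_antipode_apply {coeff : List ℕ → (A →ₗ[K] K)} (hcoeff : IsDualFamily coeff e)
    (hone : e [] = 1) (hmul : HasShuffleProduct e) (hcomul : HasDeconcatenationCoproduct K e)
    (hcounit : HasEmptyWordCounit K e) {σ : List ℕ} (hσ : IsPermList σ) :
    coeff (List.range' 1 σ.length) (HopfAlgebra.antipode K (e σ)) =
      if σ.Pairwise (· > ·) then (-1) ^ σ.length else 0 := by
  induction hn : σ.length using Nat.strong_induction_on generalizing σ with
  | _ n ih =>
  rcases eq_or_ne σ [] with rfl | hne
  · subst hn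
    rw [hone, HopfAlgebra.antipode_one, ← hone]
    simp [hcoeff [] [] hσ hσ]
  have hterm : ∀ i ∈ Finset.range n,
      coeff (List.range' 1 n) (HopfAlgebra.antipode K (e (stw (σ.take i))) * e (stw (σ.drop i))) =
        if IsValleySplit σ i then (-1) ^ i else 0 := by
    intro i hi
    have hi : i < n := Finset.mem_range.1 hi
    have hτ := hσ.isPermList_stw_take i
    have hρ := hσ.isPermList_stw_drop i
    have hτl : (stw (σ.take i)).length = i := by simp [length_stw]; omega
    have hρl : (stw (σ.drop i)).length = n - i := by simp [length_stw, hn]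
    have hSτ : HopfAlgebra.antipode K (e (stw (σ.take i))) ∈ permSpan K e i := by
      simpa only [hτl] using antipode_apply_mem_permSpan hone hmul hcomul hcounit hτ
    have hρ' : e (stw (σ.drop i)) ∈ permSpan K e (n - i) := hρl ▸ apply_mem_permSpan hρ
    rw [← Nat.add_sub_cancel' hi.le, coeff_range'_mul hcoeff hmul hSτ hρ', ih i hi hτ hτl,
      hcoeff _ _ (isPermList_range' _) hρ, ite_zero_mul_ite_zero, mul_one]
    refine if_congr ?_ rfl rfl
    rw [pairwise_gt_stw_iff, ← hρl, eq_comm, hρ.eq_range'_iff, pairwise_lt_stw_iff]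
    rfl
  have hsum := sum_ite_isValleySplit_eq_zero (R := K) hσ.nodup hne
  rw [hn, Finset.sum_range_succ, add_eq_zero_iff_neg_eq] at hsum
  rw [antipode_apply_eq_neg_sum hone hcomul hcounit hσ hne, map_neg, map_sum, hn,
    Finset.sum_congr rfl hterm, hsum, ← hn]
  exact if_congr isValleySplit_length_iff rfl rfl

end Hopf

end SSym

/-- in the Malvenuto–Reutenauer Hopf algebra `SSym`, the
coefficient of the identity permutation `12⋯n` in `S(σ)`, for `σ ∈ S_n`, is
`(-1)^n` if `σ = n(n-1)⋯1` and `0` otherwise. -/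
theorem ssym_coeff_identity_antipode (K : Type) [Field K] (A : Type) [Ring A]
    [HopfAlgebra K A] (e : List ℕ → A)
    (coeff : List ℕ → (A →ₗ[K] K))
    (hcoeff : ∀ v w : List ℕ, IsPermList v → IsPermList w →
      coeff v (e w) = if v = w then (1 : K) else 0)
    (hone : e [] = 1)
    (hmul : ∀ v w : List ℕ, IsPermList v → IsPermList w →
      e v * e w = ((shuffles v (w.map (· + v.length))).map e).sum)
    (hcomul : ∀ w : List ℕ, IsPermList w →
      Coalgebra.comul (R := K) (e w) =
        ∑ i ∈ Finset.range (w.length + 1),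
          e (stw (w.take i)) ⊗ₜ[K] e (stw (w.drop i)))
    (hcounit : ∀ w : List ℕ, IsPermList w →
      Coalgebra.counit (R := K) (e w) = if w = [] then (1 : K) else 0)
    (σ : List ℕ) (hσ : IsPermList σ) :
    coeff (List.range' 1 σ.length) (HopfAlgebra.antipode (R := K) (e σ)) =
      if σ = (List.range' 1 σ.length).reverse then ((-1 : K) ^ σ.length)
      else 0 := by
  rw [coeff_range'_antipode_apply hcoeff hone hmul hcomul hcounit hσ]
  exact if_congr hσ.eq_reverse_range'_iff.symm rfl rfl
end ValleySplit
end
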